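/- Let 𝔈 be the ring of Eisenstein integers, K the subfield of ℂ generated by 𝔈, and f : ℂ → 𝔈 a nearest integer algorithm for 𝔈. Let z ∈ ℂ \ K, let (a_n)_{n≥0} be the partial quotients of z with respect to f, and let (p_n), (q_n) be the Q-pair corresponding to (a_n). Then |q_{n+1}| > (3/2)·|q_{n−1}| for all n ≥ 1. -/

import Mathlib

/-!
Write `εₘ = zₘ - aₘ`. The Eisenstein lattice has covering radius `1/√3`, so `|εₘ| ≤ 1/√3` and
`|zₘ₊₁| = 1/|εₘ| ≥ √3`; hence `|aₘ| > 1` for `m ≥ 1`, and since no Eisenstein integer has norm `2`,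
even `|aₘ| ≥ √3`. The numbers `Gₘ = qₘ zₘ₊₁ + qₘ₋₁` satisfy `Gₘ₊₁ = zₘ₊₂ Gₘ`, and induction on
`qₘ₊₁ = Gₘ - qₘ εₘ₊₁` gives `2|qₘ| < √3 |Gₘ|`. Finally `qₘ₊₂ = aₘ₊₂ Gₘ + qₘ εₘ₊₁ εₘ₊₂`, so
`|qₘ₊₂| ≥ √3 |Gₘ| - |qₘ|/3 > 2|qₘ| - |qₘ|/3 ≥ (3/2)|qₘ|`.
-/

open Complex

noncomputable def eisensteinOmega : ℂ := -(1 / 2) + (√3 / 2) * I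

def eisensteinLattice : Set ℂ := {w | ∃ x y : ℤ, w = (x : ℂ) + (y : ℂ) * eisensteinOmega}

lemma eisensteinOmega_re : eisensteinOmega.re = -(1 / 2) := by simp [eisensteinOmega]

lemma eisensteinOmega_im : eisensteinOmega.im = √3 / 2 := by simp [eisensteinOmega]

lemma normSq_add_mul_eisensteinOmega (u v : ℝ) :
    normSq ((u : ℂ) + v * eisensteinOmega) = u ^ 2 - u * v + v ^ 2 := by
  rw [normSq_apply]
  simp only [add_re, add_im, mul_re, mul_im, ofReal_re, ofReal_im, eisensteinOmega_re,
    eisensteinOmega_im]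
  linear_combination (v ^ 2 / 4) * Real.sq_sqrt (show (0 : ℝ) ≤ 3 by norm_num)

lemma int_sq_sub_mul_add_sq_ne_two (x y : ℤ) : x ^ 2 - x * y + y ^ 2 ≠ 2 := by
  -- `x² - xy + y²` is never `2` modulo `4`.
  intro h
  have h4 := congrArg (Int.cast : ℤ → ZMod 4) h
  push_cast at h4
  generalize (x : ZMod 4) = s at h4
  generalize (y : ZMod 4) = t at h4
  revert s t
  decide

lemma exists_int_sq_sub_mul_add_sq_le (u v : ℝ) :
    ∃ x y : ℤ, (u - x) ^ 2 - (u - x) * (v - y) + (v - y) ^ 2 ≤ 1 / 3 := by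
  obtain ⟨x, s, rfl, hs0, hs1⟩ : ∃ (x : ℤ) (s : ℝ), u = x + s ∧ 0 ≤ s ∧ s < 1 :=
    ⟨⌊u⌋, Int.fract u, (Int.floor_add_fract u).symm, Int.fract_nonneg u, Int.fract_lt_one u⟩
  obtain ⟨y, t, rfl, ht0, ht1⟩ : ∃ (y : ℤ) (t : ℝ), v = y + t ∧ 0 ≤ t ∧ t < 1 :=
    ⟨⌊v⌋, Int.fract v, (Int.floor_add_fract v).symm, Int.fract_nonneg v, Int.fract_lt_one v⟩
  by_contra! h
  have h00 := h x y
  have h10 := h (x + 1) y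
  have h01 := h x (y + 1)
  have h11 := h (x + 1) (y + 1)
  push_cast at h00 h10 h01 h11
  ring_nf at h00 h10 h01 h11
  -- `s + tω` lies in one of the unit equilateral triangles `0, 1, 1 + ω` or `0, ω, 1 + ω`; the
  -- average of its squared distances to the vertices, weighted by its barycentric coordinates,
  -- is `1/3 - (s - t/2 - 1/2)² - 3/4 (t - 1/3)²` (resp. with `s` and `t` swapped).
  rcases le_total t s with hts | hst
  · nlinarith [mul_nonneg (sub_nonneg.2 hs1.le) (sub_nonneg.2 h00.le),
      mul_nonneg (sub_nonneg.2 hts) (sub_nonneg.2 h10.le), mul_nonneg ht0 (sub_nonneg.2 h11.le),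
      sq_nonneg (s - t / 2 - 1 / 2), sq_nonneg (t - 1 / 3)]
  · nlinarith [mul_nonneg (sub_nonneg.2 ht1.le) (sub_nonneg.2 h00.le),
      mul_nonneg (sub_nonneg.2 hst) (sub_nonneg.2 h01.le), mul_nonneg hs0 (sub_nonneg.2 h11.le),
      sq_nonneg (t - s / 2 - 1 / 2), sq_nonneg (s - 1 / 3)]

lemma exists_mem_eisensteinLattice_normSq_sub_le (w : ℂ) :
    ∃ b ∈ eisensteinLattice, normSq (w - b) ≤ 1 / 3 := by
  set v : ℝ := 2 / √3 * w.im
  obtain ⟨x, y, hxy⟩ := exists_int_sq_sub_mul_add_sq_le (w.re + v / 2) v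
  refine ⟨x + y * eisensteinOmega, ⟨x, y, rfl⟩, ?_⟩
  have hw : w - (x + y * eisensteinOmega)
      = ((w.re + v / 2 - x : ℝ) : ℂ) + (v - y : ℝ) * eisensteinOmega := by
    have : √3 ≠ 0 := by positivity
    apply Complex.ext <;> simp [eisensteinOmega_re, eisensteinOmega_im, v] <;> field_simp; ring
  rwa [hw, normSq_add_mul_eisensteinOmega]

lemma sqrt_three_le_norm_of_one_lt {b : ℂ} (hb : b ∈ eisensteinLattice) (h : 1 < ‖b‖) :
    √3 ≤ ‖b‖ := by
  obtain ⟨x, y, rfl⟩ := hb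
  have hN : normSq ((x : ℂ) + y * eisensteinOmega) = ((x ^ 2 - x * y + y ^ 2 : ℤ) : ℝ) := by
    push_cast
    exact_mod_cast normSq_add_mul_eisensteinOmega x y
  rw [norm_def, hN] at h ⊢
  have h1 : 1 < x ^ 2 - x * y + y ^ 2 := by
    have := (Real.lt_sqrt zero_le_one).1 h
    rw [one_pow] at this
    exact_mod_cast this
  have h3 : (3 : ℝ) ≤ ((x ^ 2 - x * y + y ^ 2 : ℤ) : ℝ) := by
    have := int_sq_sub_mul_add_sq_ne_two x y
    exact_mod_cast (by omega : (3 : ℤ) ≤ x ^ 2 - x * y + y ^ 2)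
  exact Real.sqrt_le_sqrt h3

lemma sqrt_three_mul_norm_sub_le_one {f : ℂ → ℂ}
    (hnear : ∀ w : ℂ, ∀ b ∈ eisensteinLattice, ‖w - f w‖ ≤ ‖w - b‖) (w : ℂ) :
    √3 * ‖w - f w‖ ≤ 1 := by
  obtain ⟨b, hb, hwb⟩ := exists_mem_eisensteinLattice_normSq_sub_le w
  have hsq : (√3 * ‖w - b‖) ^ 2 ≤ 1 := by
    rw [mul_pow, Real.sq_sqrt (by norm_num), Complex.sq_norm]
    linarith
  calc √3 * ‖w - f w‖ ≤ √3 * ‖w - b‖ := by gcongr; exact hnear w b hb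
    _ ≤ 1 := (pow_le_one_iff_of_nonneg (by positivity) two_ne_zero).1 hsq

section Iteration

variable {F : Type*} [Field F] {K : Subfield F} {f : F → F} {zs : ℕ → F}

lemma iterate_not_mem (hf : ∀ w, f w ∈ K) (h0 : zs 0 ∉ K)
    (hrec : ∀ n, zs (n + 1) = (zs n - f (zs n))⁻¹) (n : ℕ) : zs n ∉ K := by
  induction n with
  | zero => exact h0
  | succ n ih =>
    rw [hrec n, inv_mem_iff]
    exact fun h ↦ ih (by simpa using add_mem h (hf (zs n)))

lemma iterate_succ_mul_sub_eq_one (hf : ∀ w, f w ∈ K) (h0 : zs 0 ∉ K)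
    (hrec : ∀ n, zs (n + 1) = (zs n - f (zs n))⁻¹) (n : ℕ) :
    zs (n + 1) * (zs n - f (zs n)) = 1 := by
  refine hrec n ▸ inv_mul_cancel₀ (sub_ne_zero.2 fun h ↦ ?_)
  exact iterate_not_mem hf h0 hrec n (h ▸ hf (zs n))

end Iteration

/-- `completeDenom q zs m` is `qₘ zₘ₊₁ + qₘ₋₁` in the paper's indexing: the denominator in
`z = (pₘ zₘ₊₁ + pₘ₋₁) / (qₘ zₘ₊₁ + qₘ₋₁)`. -/
def completeDenom (q zs : ℕ → ℂ) (m : ℕ) : ℂ := q (m + 1) * zs (m + 1) + q m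

section Growth

variable {zs a q : ℕ → ℂ}
  (hinv : ∀ m, zs (m + 1) * (zs m - a m) = 1)
  (hrem : ∀ m, √3 * ‖zs m - a m‖ ≤ 1)
  (hq0 : q 0 = 0) (hq1 : q 1 = 1) (hq : ∀ n, q (n + 2) = a (n + 1) * q (n + 1) + q n)

include hinv hq in
lemma completeDenom_succ (m : ℕ) :
    completeDenom q zs (m + 1) = zs (m + 2) * completeDenom q zs m := by
  unfold completeDenom
  linear_combination zs (m + 2) * hq m - q (m + 1) * hinv (m + 1)

include hinv hrem in
lemma sqrt_three_le_norm_succ (m : ℕ) : √3 ≤ ‖zs (m + 1)‖ :=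
  calc √3 = √3 * ‖zs m - a m‖ * ‖zs (m + 1)‖ := by
        rw [mul_assoc, mul_comm ‖zs m - a m‖, ← norm_mul, hinv, norm_one, mul_one]
    _ ≤ ‖zs (m + 1)‖ := mul_le_of_le_one_left (norm_nonneg _) (hrem m)

include hinv hrem hq0 hq1 hq in
lemma two_mul_norm_lt_sqrt_three_mul_completeDenom (m : ℕ) :
    2 * ‖q (m + 1)‖ < √3 * ‖completeDenom q zs m‖ := by
  have h3 : √3 * √3 = 3 := Real.mul_self_sqrt (by norm_num)
  induction m with
  | zero =>
    have : √3 ≤ ‖zs 1‖ := sqrt_three_le_norm_succ hinv hrem 0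
    simp only [completeDenom, zero_add, hq0, hq1, norm_one, mul_one, add_zero, one_mul]
    nlinarith [mul_le_mul_of_nonneg_left this (Real.sqrt_nonneg 3)]
  | succ m ih =>
    have hsplit :
        q (m + 2) = completeDenom q zs m - q (m + 1) * (zs (m + 1) - a (m + 1)) := by
      unfold completeDenom; linear_combination hq m
    have hsmall : √3 * (‖q (m + 1)‖ * ‖zs (m + 1) - a (m + 1)‖) ≤ ‖q (m + 1)‖ := by
      have := mul_le_mul_of_nonneg_left (hrem (m + 1)) (norm_nonneg (q (m + 1)))
      linarith
    have hle : ‖q (m + 2)‖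
        ≤ ‖completeDenom q zs m‖ + ‖q (m + 1)‖ * ‖zs (m + 1) - a (m + 1)‖ := by
      rw [hsplit, ← norm_mul]; exact norm_sub_le _ _
    have hgrow : √3 * ‖completeDenom q zs m‖ ≤ ‖completeDenom q zs (m + 1)‖ := by
      rw [completeDenom_succ hinv hq, norm_mul]
      exact mul_le_mul_of_nonneg_right (sqrt_three_le_norm_succ hinv hrem _) (norm_nonneg _)
    have hcross : 2 * (‖q (m + 1)‖ * ‖zs (m + 1) - a (m + 1)‖) < ‖completeDenom q zs m‖ :=
      lt_of_mul_lt_mul_left (by linarith) (Real.sqrt_nonneg 3)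
    calc 2 * ‖q (m + 2)‖ < 3 * ‖completeDenom q zs m‖ := by linarith
      _ = √3 * (√3 * ‖completeDenom q zs m‖) := by rw [← mul_assoc, h3]
      _ ≤ √3 * ‖completeDenom q zs (m + 1)‖ := by gcongr

include hinv hrem in
lemma one_lt_norm_succ (m : ℕ) : 1 < ‖a (m + 1)‖ := by
  have h3 : √3 * √3 = 3 := Real.mul_self_sqrt (by norm_num)
  have hzs := mul_le_mul_of_nonneg_left (sqrt_three_le_norm_succ hinv hrem m) (Real.sqrt_nonneg 3)
  have htri := mul_le_mul_of_nonneg_left (norm_le_norm_add_norm_sub' (zs (m + 1)) (a (m + 1)))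
    (Real.sqrt_nonneg 3)
  have hsqrt : √3 < 2 := by
    rw [Real.sqrt_lt' two_pos]; norm_num
  refine lt_of_mul_lt_mul_left (a := √3) ?_ (Real.sqrt_nonneg 3)
  nlinarith [hrem (m + 1)]

include hinv hq in
lemma q_add_three_eq (m : ℕ) : q (m + 3) = a (m + 2) * completeDenom q zs m
    + q (m + 1) * ((zs (m + 1) - a (m + 1)) * (zs (m + 2) - a (m + 2))) := by
  unfold completeDenom
  linear_combination hq (m + 1) + a (m + 2) * hq m - q (m + 1) * hinv (m + 1)

include hinv hrem hq0 hq1 hq in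
theorem three_halves_mul_norm_lt_norm_add_three (hquot : ∀ m, √3 ≤ ‖a (m + 1)‖) (m : ℕ) :
    3 / 2 * ‖q (m + 1)‖ < ‖q (m + 3)‖ := by
  have h3 : √3 * √3 = 3 := Real.mul_self_sqrt (by norm_num)
  have hkey := two_mul_norm_lt_sqrt_three_mul_completeDenom hinv hrem hq0 hq1 hq m
  have hle : ‖a (m + 2)‖ * ‖completeDenom q zs m‖ ≤ ‖q (m + 3)‖
      + ‖q (m + 1)‖ * (‖zs (m + 1) - a (m + 1)‖ * ‖zs (m + 2) - a (m + 2)‖) := by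
    rw [← norm_mul, ← norm_mul, ← norm_mul, q_add_three_eq hinv hq m]
    exact norm_le_add_norm_add _ _
  have hprod : 3 * (‖zs (m + 1) - a (m + 1)‖ * ‖zs (m + 2) - a (m + 2)‖) ≤ 1 := by
    have := mul_le_mul (hrem (m + 1)) (hrem (m + 2)) (by positivity) zero_le_one
    linear_combination this - (‖zs (m + 1) - a (m + 1)‖ * ‖zs (m + 2) - a (m + 2)‖) * h3
  have hquot' : √3 * ‖completeDenom q zs m‖ ≤ ‖a (m + 2)‖ * ‖completeDenom q zs m‖ :=
    mul_le_mul_of_nonneg_right (hquot (m + 1)) (norm_nonneg _)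
  have hprod' := mul_le_mul_of_nonneg_left hprod (norm_nonneg (q (m + 1)))
  linarith [norm_nonneg (q (m + 1))]

end Growth

/-- Q-pairs are indexed with offset one: `q (n + 1)` is the paper's `qₙ`. -/
theorem eisenstein_nearest_exponential_growth_general
    (ω : ℂ) (hω : ω = -(1 / 2) + (Real.sqrt 3 / 2) * Complex.I)
    (E : Set ℂ) (hE : E = {w : ℂ | ∃ x y : ℤ, w = (x : ℂ) + (y : ℂ) * ω})
    (f : ℂ → ℂ) (hfE : ∀ w, f w ∈ E)
    (hnear : ∀ w : ℂ, ∀ b ∈ E, ‖w - f w‖ ≤ ‖w - b‖)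
    (K : Subfield ℂ) (hK : K = Subfield.closure E)
    (z : ℂ) (hzK : z ∉ K)
    (zs : ℕ → ℂ) (hzs0 : zs 0 = z)
    (hzsrec : ∀ n, zs (n + 1) = (zs n - f (zs n))⁻¹)
    (a : ℕ → ℂ) (ha : ∀ n, a n = f (zs n))
    (q : ℕ → ℂ)
    (hq0 : q 0 = 0) (hq1 : q 1 = 1)
    (hq : ∀ n, q (n + 2) = a (n + 1) * q (n + 1) + q n) :
    ∀ n : ℕ, 1 ≤ n → 3 / 2 * ‖q n‖ < ‖q (n + 2)‖ := by
  subst hω hE hK hzs0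
  obtain rfl : a = fun n ↦ f (zs n) := funext ha
  change ∀ w, f w ∈ eisensteinLattice at hfE
  change ∀ w, ∀ b ∈ eisensteinLattice, _ at hnear
  have hinv := iterate_succ_mul_sub_eq_one (fun w ↦ Subfield.subset_closure (hfE w)) hzK hzsrec
  have hrem m := sqrt_three_mul_norm_sub_le_one hnear (zs m)
  have hquot m : √3 ≤ ‖f (zs (m + 1))‖ :=
    sqrt_three_le_norm_of_one_lt (hfE _) (one_lt_norm_succ hinv hrem m)
  rintro n hn
  obtain ⟨m, rfl⟩ := Nat.exists_eq_add_of_le' hn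
  exact three_halves_mul_norm_lt_norm_add_three hinv hrem hq0 hq1 hq hquot m

/-- Exponential growth of denominators for the nearest integer algorithm over
the Eisenstein integers: `|q₍ₙ₊₁₎| > (3/2)|q₍ₙ₋₁₎|` for all `n ≥ 1`.
(Q-pairs are indexed with offset one, so `q (n+1) = qₙ`.) -/
theorem eisenstein_nearest_exponential_growth
    (ω : ℂ) (hω : ω = -(1 / 2) + (Real.sqrt 3 / 2) * Complex.I)
    (E : Set ℂ) (hE : E = {w : ℂ | ∃ x y : ℤ, w = (x : ℂ) + (y : ℂ) * ω})
    (f : ℂ → ℂ) (hfE : ∀ w, f w ∈ E)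
    (hnear : ∀ w : ℂ, ∀ b ∈ E, ‖w - f w‖ ≤ ‖w - b‖)
    (K : Subfield ℂ) (hK : K = Subfield.closure E)
    (z : ℂ) (hzK : z ∉ K)
    (zs : ℕ → ℂ) (hzs0 : zs 0 = z)
    (hzsrec : ∀ n, zs (n + 1) = (zs n - f (zs n))⁻¹)
    (a : ℕ → ℂ) (ha : ∀ n, a n = f (zs n))
    (p q : ℕ → ℂ)
    (hp0 : p 0 = 1) (hp1 : p 1 = a 0)
    (hp : ∀ n, p (n + 2) = a (n + 1) * p (n + 1) + p n)
    (hq0 : q 0 = 0) (hq1 : q 1 = 1)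
    (hq : ∀ n, q (n + 2) = a (n + 1) * q (n + 1) + q n) :
    ∀ n : ℕ, 1 ≤ n → 3 / 2 * ‖q n‖ < ‖q (n + 2)‖ :=
  eisenstein_nearest_exponential_growth_general ω hω E hE f hfE hnear K hK z hzK zs hzs0 hzsrec a ha
    q hq0 hq1 hq
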